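/- If H is an induced subgraph of G on vertex set V' ⊆ [p], and M ∈ S^{V'}_{⪰0}(H) is extremal in the cone of PSD matrices on V' vanishing at nonedges of H, then the p×p matrix M̃ obtained from M by padding with zero rows and columns for vertices outside V' is extremal in S^p_{⪰0}(G) and has the same rank as M. Consequently ord(H) ≤ ord(G). -/

import Mathlib

open Matrix BigOperators

/-- The cone of real positive semidefinite matrices with zeros at nonedges of a graph
with adjacency relation `Adj`. -/
def psdCone {n : Type*} [Fintype n] (Adj : n → n → Prop) : Set (Matrix n n ℝ) :=
  {X | X.PosSemidef ∧ ∀ i j, i ≠ j → ¬ Adj i j → X i j = 0}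

/-- `X` lies on an extreme ray of the convex cone `S`: it belongs to `S` and whenever
`X = A + B` with `A, B ∈ S`, both `A` and `B` are nonnegative multiples of `X`. -/
def IsExtremalIn {n : Type*} [Fintype n] (S : Set (Matrix n n ℝ)) (X : Matrix n n ℝ) : Prop :=
  X ∈ S ∧ ∀ A B : Matrix n n ℝ, A ∈ S → B ∈ S → X = A + B →
    (∃ c : ℝ, 0 ≤ c ∧ A = c • X) ∧ (∃ d : ℝ, 0 ≤ d ∧ B = d • X)

/-- The sparsity order of a graph (with adjacency `Adj`): the maximum rank of a matrix
lying on an extreme ray of the cone of PSD matrices vanishing at nonedges. -/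
noncomputable def sparsityOrder {n : Type*} [Fintype n] (Adj : n → n → Prop) : ℕ :=
  sSup {k | ∃ X : Matrix n n ℝ, IsExtremalIn (psdCone Adj) X ∧ X.rank = k}

/-- Pad a matrix indexed by a vertex subset `V` with zero rows and columns. -/
def pad {p : ℕ} (V : Finset (Fin p)) (M : Matrix {x // x ∈ V} {x // x ∈ V} ℝ) :
    Matrix (Fin p) (Fin p) ℝ :=
  fun i j => if hi : i ∈ V then (if hj : j ∈ V then M ⟨i, hi⟩ ⟨j, hj⟩ else 0) else 0

/-!
Padding is the congruence `M ↦ E M Eᵀ` with the `0/1` inclusion matrix `E` of `V'`, so it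
preserves positive semidefiniteness and cannot raise the rank; since `M` is a principal
submatrix of its padding, the rank is unchanged. For extremality, suppose the
padded matrix splits as `A + B` in the cone of `G`. Outside `V'` the diagonal entries of `A` and
`B` are nonnegative with sum zero, hence zero, and a zero diagonal entry of a PSD matrix kills
its whole row and column. So `A` and `B` are the paddings of their principal submatrices on
`V'`, which lie in the cone of `H` and sum to `M`; extremality of `M` makes them multiples of
`M`. Finally `ord(H) ≤ ord(G)` because padding maps extremal matrices of `H` to extremal
matrices of `G` of the same rank.
-/

namespace Matrix.PosSemidef

open scoped ComplexOrder

variable {n 𝕜 : Type*} [Fintype n] [DecidableEq n] [RCLike 𝕜] {X : Matrix n n 𝕜}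

theorem apply_eq_zero_of_diag_eq_zero (hX : X.PosSemidef) {i : n} (hi : X i i = 0) (j : n) :
    X j i = 0 := by
  have h : X *ᵥ Pi.single i 1 = 0 :=
    (hX.dotProduct_mulVec_zero_iff _).mp (by simp [mulVec_single, hi])
  simpa [mulVec_single] using congrFun h j

theorem apply_eq_zero_of_diag_eq_zero' (hX : X.PosSemidef) {i : n} (hi : X i i = 0) (j : n) :
    X i j = 0 := by
  rw [← hX.1.apply, hX.apply_eq_zero_of_diag_eq_zero hi j, star_zero]

end Matrix.PosSemidef

theorem submatrix_mem_psdCone {m n : Type*} [Fintype m] [Fintype n] {Adj : n → n → Prop}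
    {X : Matrix n n ℝ} (hX : X ∈ psdCone Adj) {f : m → n} (hf : Function.Injective f) :
    X.submatrix f f ∈ psdCone (fun a b => Adj (f a) (f b)) :=
  ⟨hX.1.submatrix f, fun a b hab hadj => hX.2 (f a) (f b) (hf.ne hab) hadj⟩

theorem sparsityOrder_le_of_map {m n : Type*} [Fintype m] [Fintype n] {Adj : m → m → Prop}
    {Adj' : n → n → Prop} (f : Matrix m m ℝ → Matrix n n ℝ)
    (hf : ∀ X, IsExtremalIn (psdCone Adj) X →
      IsExtremalIn (psdCone Adj') (f X) ∧ (f X).rank = X.rank) :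
    sparsityOrder Adj ≤ sparsityOrder Adj' := by
  refine csSup_le_csSup' ⟨Fintype.card n, ?_⟩ ?_
  · rintro k ⟨X, -, rfl⟩
    exact X.rank_le_card_width
  · rintro k ⟨X, hX, rfl⟩
    exact ⟨f X, hf X hX⟩

section Pad

variable {p : ℕ} (V : Finset (Fin p)) (M : Matrix V V ℝ)

def inclusionMatrix : Matrix (Fin p) V ℝ :=
  (1 : Matrix (Fin p) (Fin p) ℝ).submatrix id Subtype.val

theorem inclusionMatrix_mul_apply {m : Type*} (N : Matrix V m ℝ) (i : Fin p) (b : m) :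
    (inclusionMatrix V * N) i b = if h : i ∈ V then N ⟨i, h⟩ b else 0 := by
  simp only [inclusionMatrix, mul_apply, submatrix_apply, id, one_apply, ite_mul, one_mul,
    zero_mul]
  split_ifs with h
  · rw [Fintype.sum_eq_single ⟨i, h⟩ fun j hj => if_neg fun e => hj (Subtype.ext e.symm),
      if_pos rfl]
  · exact Finset.sum_eq_zero fun j _ => if_neg fun (e : i = j) => h (e ▸ j.2)

theorem pad_eq_inclusionMatrix_mul :
    pad V M = inclusionMatrix V * M * (inclusionMatrix V)ᵀ := by
  rw [Matrix.mul_assoc, ← transpose_transpose M, ← transpose_mul]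
  ext i j
  simp only [pad, inclusionMatrix_mul_apply, transpose_apply]

@[simp]
theorem pad_submatrix : (pad V M).submatrix Subtype.val Subtype.val = M := by
  ext a b
  simp [pad]

theorem pad_smul (c : ℝ) : pad V (c • M) = c • pad V M := by
  ext i j
  simp only [pad, Matrix.smul_apply, smul_eq_mul]
  split_ifs <;> simp

theorem rank_pad : (pad V M).rank = M.rank := by
  refine le_antisymm ?_ ?_
  · rw [pad_eq_inclusionMatrix_mul]
    exact (rank_mul_le_left _ _).trans (rank_mul_le_right _ _)
  · calc M.rank = ((pad V M).submatrix Subtype.val Subtype.val).rank := by rw [pad_submatrix]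
      _ ≤ (pad V M).rank := rank_submatrix_le _ _ _

theorem pad_mem_psdCone {Adj : Fin p → Fin p → Prop} (hM : M ∈ psdCone fun a b : V => Adj a b) :
    pad V M ∈ psdCone Adj := by
  refine ⟨?_, fun i j hij hadj => ?_⟩
  · rw [pad_eq_inclusionMatrix_mul, ← conjTranspose_eq_transpose_of_trivial]
    exact hM.1.mul_mul_conjTranspose_same _
  · simp only [pad]
    split_ifs with hi hj
    · exact hM.2 ⟨i, hi⟩ ⟨j, hj⟩ (fun h => hij (congrArg Subtype.val h)) hadj
    all_goals rfl

variable {V M}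

theorem eq_pad_submatrix_of_add_eq_pad {A B : Matrix (Fin p) (Fin p) ℝ} (hA : A.PosSemidef)
    (hB : B.PosSemidef) (h : A + B = pad V M) :
    A = pad V (A.submatrix Subtype.val Subtype.val) := by
  have hdiag : ∀ i ∉ V, A i i = 0 := by
    intro i hi
    have hsum : A i i + B i i = 0 := by simpa [pad, hi] using congrFun (congrFun h i) i
    linarith [hA.diag_nonneg (i := i), hB.diag_nonneg (i := i)]
  ext i j
  simp only [pad, submatrix_apply]
  split_ifs with hi hj
  · rfl
  · exact hA.apply_eq_zero_of_diag_eq_zero (hdiag j hj) i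
  · exact hA.apply_eq_zero_of_diag_eq_zero' (hdiag i hi) j

theorem IsExtremalIn.pad {Adj : Fin p → Fin p → Prop}
    (hM : IsExtremalIn (psdCone fun a b : V => Adj a b) M) :
    IsExtremalIn (psdCone Adj) (pad V M) := by
  refine ⟨pad_mem_psdCone V M hM.1, fun A B hA hB h => ?_⟩
  have hM_eq : M = A.submatrix Subtype.val Subtype.val + B.submatrix Subtype.val Subtype.val := by
    rw [← pad_submatrix V M, h]
    rfl
  obtain ⟨⟨c, hc, hAc⟩, ⟨d, hd, hBd⟩⟩ := hM.2 _ _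
    (submatrix_mem_psdCone hA Subtype.val_injective)
    (submatrix_mem_psdCone hB Subtype.val_injective) hM_eq
  refine ⟨⟨c, hc, ?_⟩, ⟨d, hd, ?_⟩⟩
  · rw [eq_pad_submatrix_of_add_eq_pad hA.1 hB.1 h.symm, hAc, pad_smul]
  · rw [eq_pad_submatrix_of_add_eq_pad hB.1 hA.1 (by rw [add_comm, h]), hBd, pad_smul]

end Pad

theorem induced_subgraph_extremal_padding (p : ℕ) (G : SimpleGraph (Fin p))
    (V : Finset (Fin p)) (M : Matrix {x // x ∈ V} {x // x ∈ V} ℝ)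
    (hM : IsExtremalIn
      (psdCone (fun a b : {x // x ∈ V} => G.Adj a.1 b.1)) M) :
    IsExtremalIn (psdCone G.Adj) (pad V M) ∧
    (pad V M).rank = M.rank ∧
    sparsityOrder (fun a b : {x // x ∈ V} => G.Adj a.1 b.1) ≤ sparsityOrder G.Adj :=
  ⟨hM.pad, rank_pad V M, sparsityOrder_le_of_map (pad V) fun X hX => ⟨hX.pad, rank_pad V X⟩⟩
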